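/- arXiv:1501.07324 — 2 statements merged into one kernel-verified Lean document; each statement's English description precedes it below -/
import Mathlib

section
/- Let M be the 6×6 symmetric matrix M = [[2,0,0,0,1,1],[0,2,0,0,1,1],[0,0,2,0,1,1],[0,0,0,2,1,1],[1,1,1,1,4,4],[1,1,1,1,4,4]]. If N is a 6×8 matrix with nonnegative integer entries satisfying N·Nᵀ = M, then up to permutation of columns N equals the matrix [[1,1,0,0,0,0,0,0],[0,0,1,1,0,0,0,0],[0,0,0,0,1,1,0,0],[0,0,0,0,0,0,1,1],[1,0,1,0,1,0,1,0],[1,0,1,0,1,0,1,0]]. -/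
open Matrix

lemma aux_inj (f h : Fin 8 → ℕ) (hf2 : ∑ k, f k * f k = 2) (hfh : ∑ k, f k * h k = 1)
    (hb : ∀ k, f k ≤ 1) (j j' : Fin 8) (hj : f j = 1) (hj' : f j' = 1)
    (he : h j = h j') (hh : ∀ k, h k ≤ 1) : j = j' := by
  by_contra hne
  rcases Nat.le_one_iff_eq_zero_or_eq_one.mp (hh j) with h0 | h1
  · have hex : ∃ k ∈ (Finset.univ : Finset (Fin 8)), f k * h k ≠ 0 :=
      Finset.exists_ne_zero_of_sum_ne_zero (by rw [hfh]; omega)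
    obtain ⟨k, -, hk0⟩ := hex
    rw [Nat.mul_ne_zero_iff] at hk0
    have hfk : f k = 1 := by have := hb k; omega
    have hhk : h k = 1 := by have := hh k; omega
    have hkj : k ≠ j := fun hkj => by rw [hkj, h0] at hhk; omega
    have hkj' : k ≠ j' := fun hkj => by rw [hkj, ← he, h0] at hhk; omega
    have hknot : k ∉ ({j, j'} : Finset (Fin 8)) := by simp [hkj, hkj']
    have h3 : ∑ m ∈ insert k ({j, j'} : Finset (Fin 8)), f m * f m ≤ ∑ m, f m * f m :=
      Finset.sum_le_sum_of_subset (Finset.subset_univ _)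
    rw [Finset.sum_insert hknot, Finset.sum_pair hne, hfk, hj, hj', hf2] at h3
    omega
  · have h2 : ∑ m ∈ ({j, j'} : Finset (Fin 8)), f m * h m ≤ ∑ m, f m * h m :=
      Finset.sum_le_sum_of_subset (Finset.subset_univ _)
    rw [Finset.sum_pair hne, hj, hj', ← he, h1, hfh] at h2
    omega

/-- If N is a 6×8 matrix with nonnegative integer entries satisfying N·Nᵀ = M for the
given 6×6 symmetric matrix M, then up to permutation of columns N equals the given
matrix N₀. -/
theorem stmt_5 (N : Matrix (Fin 6) (Fin 8) ℕ)
    (hN : N * Nᵀ =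
      !![2,0,0,0,1,1;
         0,2,0,0,1,1;
         0,0,2,0,1,1;
         0,0,0,2,1,1;
         1,1,1,1,4,4;
         1,1,1,1,4,4]) :
    ∃ e : Equiv.Perm (Fin 8), ∀ i j, N i j =
      !![1,1,0,0,0,0,0,0;
         0,0,1,1,0,0,0,0;
         0,0,0,0,1,1,0,0;
         0,0,0,0,0,0,1,1;
         1,0,1,0,1,0,1,0;
         1,0,1,0,1,0,1,0] i (e j) := by
  have key : ∀ i k : Fin 6, ∑ j, N i j * N k j = (N * Nᵀ) i k := by
    intro i k; rw [Matrix.mul_apply]; simp [Matrix.transpose_apply]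
  have h00 : ∑ j, N 0 j * N 0 j = 2 := by rw [key 0 0, hN]; decide
  have h11 : ∑ j, N 1 j * N 1 j = 2 := by rw [key 1 1, hN]; decide
  have h22 : ∑ j, N 2 j * N 2 j = 2 := by rw [key 2 2, hN]; decide
  have h33 : ∑ j, N 3 j * N 3 j = 2 := by rw [key 3 3, hN]; decide
  have h44 : ∑ j, N 4 j * N 4 j = 4 := by rw [key 4 4, hN]; decide
  have h55 : ∑ j, N 5 j * N 5 j = 4 := by rw [key 5 5, hN]; decide
  have h45 : ∑ j, N 4 j * N 5 j = 4 := by rw [key 4 5, hN]; decide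
  -- entries of rows 0..3 are ≤ 1
  have hble : ∀ (f : Fin 8 → ℕ), (∑ j, f j * f j = 2) → ∀ j, f j ≤ 1 := by
    intro f h j
    by_contra hc
    push_neg at hc
    have h2 : f j * f j ≤ 2 :=
      h ▸ Finset.single_le_sum (f := fun k => f k * f k) (fun _ _ => Nat.zero_le _)
        (Finset.mem_univ j)
    nlinarith
  have hb0 := hble (N 0) h00
  have hb1 := hble (N 1) h11
  have hb2 := hble (N 2) h22
  have hb3 := hble (N 3) h33
  -- row sums of rows 0..3 equal 2
  have hrs : ∀ (f : Fin 8 → ℕ), (∑ j, f j * f j = 2) → (∀ j, f j ≤ 1) → ∑ j, f j = 2 := by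
    intro f h hb
    rw [← h]
    apply Finset.sum_congr rfl
    intro j _
    have := hb j
    interval_cases (f j) <;> rfl
  have hs0 := hrs (N 0) h00 hb0
  have hs1 := hrs (N 1) h11 hb1
  have hs2 := hrs (N 2) h22 hb2
  have hs3 := hrs (N 3) h33 hb3
  -- pairwise orthogonality of rows 0..3
  have horth : ∀ (i k : Fin 6), (∑ j, N i j * N k j = 0) → ∀ j, N i j * N k j = 0 := by
    intro i k h j
    exact (Finset.sum_eq_zero_iff.mp h) j (Finset.mem_univ j)
  have o01 := horth 0 1 (by rw [key 0 1, hN]; decide)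
  have o02 := horth 0 2 (by rw [key 0 2, hN]; decide)
  have o03 := horth 0 3 (by rw [key 0 3, hN]; decide)
  have o12 := horth 1 2 (by rw [key 1 2, hN]; decide)
  have o13 := horth 1 3 (by rw [key 1 3, hN]; decide)
  have o23 := horth 2 3 (by rw [key 2 3, hN]; decide)
  -- each column has exactly one of rows 0..3 nonzero
  have ht : ∀ j, N 0 j + N 1 j + N 2 j + N 3 j = 1 := by
    have htle : ∀ j, N 0 j + N 1 j + N 2 j + N 3 j ≤ 1 := by
      intro j
      have b0 := hb0 j; have b1 := hb1 j; have b2 := hb2 j; have b3 := hb3 j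
      have p01 := o01 j; have p02 := o02 j; have p03 := o03 j
      have p12 := o12 j; have p13 := o13 j; have p23 := o23 j
      rcases Nat.le_one_iff_eq_zero_or_eq_one.mp b0 with e0 | e0 <;>
      rcases Nat.le_one_iff_eq_zero_or_eq_one.mp b1 with e1 | e1 <;>
      rcases Nat.le_one_iff_eq_zero_or_eq_one.mp b2 with e2 | e2 <;>
      rcases Nat.le_one_iff_eq_zero_or_eq_one.mp b3 with e3 | e3 <;>
        simp only [e0, e1, e2, e3, mul_one, mul_zero, one_mul, zero_mul] at p01 p02 p03 p12 p13 p23 ⊢ <;> omega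
    have hsum : ∑ j, (N 0 j + N 1 j + N 2 j + N 3 j) = 8 := by
      rw [Finset.sum_add_distrib, Finset.sum_add_distrib, Finset.sum_add_distrib,
        hs0, hs1, hs2, hs3]
    have h8 : (∑ _j : Fin 8, (1 : ℕ)) = 8 := by simp
    intro j
    exact (Finset.sum_eq_sum_iff_of_le (fun i _ => htle i)).mp (by rw [hsum, h8]) j
      (Finset.mem_univ j)
  -- inner products with rows 4, 5
  have h04 : ∑ j, N 0 j * N 4 j = 1 := by rw [key 0 4, hN]; decide
  have h14 : ∑ j, N 1 j * N 4 j = 1 := by rw [key 1 4, hN]; decide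
  have h24 : ∑ j, N 2 j * N 4 j = 1 := by rw [key 2 4, hN]; decide
  have h34 : ∑ j, N 3 j * N 4 j = 1 := by rw [key 3 4, hN]; decide
  have h05 : ∑ j, N 0 j * N 5 j = 1 := by rw [key 0 5, hN]; decide
  have h15 : ∑ j, N 1 j * N 5 j = 1 := by rw [key 1 5, hN]; decide
  have h25 : ∑ j, N 2 j * N 5 j = 1 := by rw [key 2 5, hN]; decide
  have h35 : ∑ j, N 3 j * N 5 j = 1 := by rw [key 3 5, hN]; decide
  -- row sums of rows 4, 5 equal 4
  have hsum45 : ∀ r : Fin 6, (∑ j, N 0 j * N r j = 1) → (∑ j, N 1 j * N r j = 1) →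
      (∑ j, N 2 j * N r j = 1) → (∑ j, N 3 j * N r j = 1) → ∑ j, N r j = 4 := by
    intro r p0 p1 p2 p3
    have he : ∑ j, N r j
        = ∑ j, (N 0 j * N r j + N 1 j * N r j + N 2 j * N r j + N 3 j * N r j) := by
      apply Finset.sum_congr rfl
      intro j _
      have hmul : N 0 j * N r j + N 1 j * N r j + N 2 j * N r j + N 3 j * N r j
          = (N 0 j + N 1 j + N 2 j + N 3 j) * N r j := by ring
      rw [hmul, ht j, one_mul]
    rw [he, Finset.sum_add_distrib, Finset.sum_add_distrib, Finset.sum_add_distrib,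
      p0, p1, p2, p3]
  have hS4 : ∑ j, N 4 j = 4 := hsum45 4 h04 h14 h24 h34
  have hS5 : ∑ j, N 5 j = 4 := hsum45 5 h05 h15 h25 h35
  -- entries of rows 4, 5 are ≤ 1
  have hb45 : ∀ r : Fin 6, (∑ j, N r j = 4) → (∑ j, N r j * N r j = 4) → ∀ j, N r j ≤ 1 := by
    intro r hs hss j
    have hle : ∀ k : Fin 8, k ∈ (Finset.univ : Finset (Fin 8)) → N r k ≤ N r k * N r k := by
      intro k _
      nlinarith [Nat.zero_le (N r k)]
    have heq := (Finset.sum_eq_sum_iff_of_le hle).mp (by rw [hs, hss]) j (Finset.mem_univ j)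
    nlinarith [heq]
  have hb4 := hb45 4 hS4 h44
  have hb5 := hb45 5 hS5 h55
  -- row 5 equals row 4
  have h54 : ∀ j, N 5 j = N 4 j := by
    have hle : ∀ k : Fin 8, k ∈ (Finset.univ : Finset (Fin 8)) → N 4 k * N 5 k ≤ N 4 k := by
      intro k _
      calc N 4 k * N 5 k ≤ N 4 k * 1 := Nat.mul_le_mul_left _ (hb5 k)
        _ = N 4 k := mul_one _
    have hle' : ∀ k : Fin 8, k ∈ (Finset.univ : Finset (Fin 8)) → N 4 k * N 5 k ≤ N 5 k := by
      intro k _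
      calc N 4 k * N 5 k ≤ 1 * N 5 k := Nat.mul_le_mul_right _ (hb4 k)
        _ = N 5 k := one_mul _
    intro j
    have e1 := (Finset.sum_eq_sum_iff_of_le hle).mp (by rw [h45, hS4]) j (Finset.mem_univ j)
    have e2 := (Finset.sum_eq_sum_iff_of_le hle').mp (by rw [h45, hS5]) j (Finset.mem_univ j)
    rcases Nat.le_one_iff_eq_zero_or_eq_one.mp (hb4 j) with e | e <;>
    rcases Nat.le_one_iff_eq_zero_or_eq_one.mp (hb5 j) with e' | e'
    · rw [e, e']
    · exfalso; rw [e, e'] at e2; simp at e2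
    · exfalso; rw [e, e'] at e1; simp at e1
    · rw [e, e']
  -- column map
  have hv : ∀ j, 2 * (N 1 j + 2 * N 2 j + 3 * N 3 j) + (1 - N 4 j) < 8 := by
    intro j
    have := ht j; have := hb0 j; have := hb1 j; have := hb2 j; have := hb3 j
    have := hb4 j
    omega
  set g : Fin 8 → Fin 8 :=
    fun j => ⟨2 * (N 1 j + 2 * N 2 j + 3 * N 3 j) + (1 - N 4 j), hv j⟩ with hg
  have hginj : Function.Injective g := by
    intro j j' hjj
    have hval : 2 * (N 1 j + 2 * N 2 j + 3 * N 3 j) + (1 - N 4 j)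
        = 2 * (N 1 j' + 2 * N 2 j' + 3 * N 3 j') + (1 - N 4 j') :=
      congrArg Fin.val hjj
    have b0 := hb0 j; have b1 := hb1 j; have b2 := hb2 j; have b3 := hb3 j
    have b4 := hb4 j
    have b0' := hb0 j'; have b1' := hb1 j'; have b2' := hb2 j'; have b3' := hb3 j'
    have b4' := hb4 j'
    have t1 := ht j; have t1' := ht j'
    have heqs : N 0 j = N 0 j' ∧ N 1 j = N 1 j' ∧ N 2 j = N 2 j' ∧ N 3 j = N 3 j'
        ∧ N 4 j = N 4 j' := by omega
    obtain ⟨q0, q1, q2, q3, q4⟩ := heqs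
    rcases Nat.le_one_iff_eq_zero_or_eq_one.mp b0 with e0 | e0
    · rcases Nat.le_one_iff_eq_zero_or_eq_one.mp b1 with e1 | e1
      · rcases Nat.le_one_iff_eq_zero_or_eq_one.mp b2 with e2 | e2
        · have e3 : N 3 j = 1 := by omega
          exact aux_inj (N 3) (N 4) h33 h34 hb3 j j' e3 (q3 ▸ e3) q4 hb4
        · exact aux_inj (N 2) (N 4) h22 h24 hb2 j j' e2 (q2 ▸ e2) q4 hb4
      · exact aux_inj (N 1) (N 4) h11 h14 hb1 j j' e1 (q1 ▸ e1) q4 hb4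
    · exact aux_inj (N 0) (N 4) h00 h04 hb0 j j' e0 (q0 ▸ e0) q4 hb4
  refine ⟨Equiv.ofBijective g (Finite.injective_iff_bijective.mp hginj), ?_⟩
  intro i j
  have b0 := hb0 j; have b1 := hb1 j; have b2 := hb2 j; have b3 := hb3 j
  have b4 := hb4 j
  have t1 := ht j
  have h5j := h54 j
  have hvec : ∀ m : Fin 6, N m j = ![N 0 j, N 1 j, N 2 j, N 3 j, N 4 j, N 5 j] m := by
    intro m; fin_cases m <;> rfl
  simp only [Equiv.ofBijective_apply, hg]
  rcases Nat.le_one_iff_eq_zero_or_eq_one.mp b0 with e0 | e0 <;>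
  rcases Nat.le_one_iff_eq_zero_or_eq_one.mp b1 with e1 | e1 <;>
  rcases Nat.le_one_iff_eq_zero_or_eq_one.mp b2 with e2 | e2 <;>
  rcases Nat.le_one_iff_eq_zero_or_eq_one.mp b3 with e3 | e3 <;>
  rcases Nat.le_one_iff_eq_zero_or_eq_one.mp b4 with e4 | e4 <;>
    first
      | omega
      | (rw [hvec i]; simp only [h5j, e0, e1, e2, e3, e4]; norm_num; revert i; decide)
end

section
/- Define ε : (ℤ/4ℤ × ℤ/2ℤ)² → {±1} by ε_{(0,1)}(a,b) = 1, ε_{(1,0)}(a,b) = -1 if (a,b) ∈ {(2,1),(3,1)} and 1 otherwise, extended to all of G via the cocycle rule ε_{h+k}(g) = ε_h(g)·ε_k(g+2h). Then ε is well-defined and satisfies ε_{(2,0)}(a,b) = (-1)^b for all (a,b) ∈ ℤ/4ℤ × ℤ/2ℤ. -/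
/-- The conditions defining ε on G = ℤ/4ℤ × ℤ/2ℤ: the cocycle rule
ε_{h+k}(g) = ε_h(g)·ε_k(g+2h), ε_h(0) = 1, together with the generator values
ε_{(0,1)} ≡ 1 and ε_{(1,0)}(a,b) = -1 iff (a,b) ∈ {(2,1),(3,1)}. -/
def epsCond (ε : ZMod 4 × ZMod 2 → ZMod 4 × ZMod 2 → ℤ) : Prop :=
  (∀ h k g, ε (h + k) g = ε h g * ε k (g + 2 • h)) ∧
  (∀ h, ε h 0 = 1) ∧
  (∀ g, ε (0, 1) g = 1) ∧
  (∀ g : ZMod 4 × ZMod 2, ε (1, 0) g = if g = (2, 1) ∨ g = (3, 1) then -1 else 1)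

def myeps : ZMod 4 × ZMod 2 → ZMod 4 × ZMod 2 → ℤ := fun h g =>
  if g.2 = 0 then 1
  else if h.1 = 0 then 1
  else if h.1 = 1 then (if g.1 = 2 ∨ g.1 = 3 then -1 else 1)
  else if h.1 = 2 then -1
  else (if g.1 = 0 ∨ g.1 = 1 then -1 else 1)

lemma myeps_cond : epsCond myeps := by
  refine ⟨?_, ?_, ?_, ?_⟩ <;> decide

lemma eps_eq (ε : ZMod 4 × ZMod 2 → ZMod 4 × ZMod 2 → ℤ) (h : epsCond ε) : ε = myeps := by
  obtain ⟨hc, h0, hg1, hg0⟩ := h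
  have hne : ∀ g, ε (1, 0) g ≠ 0 := by
    intro g; rw [hg0]; split <;> norm_num
  -- ε (0,0) = 1
  have hz : ∀ g, ε (0, 0) g = 1 := by
    have aux : ∀ g, ε (0, 0) (g + (2, 0)) = 1 := by
      intro g
      have := hc (1, 0) (0, 0) g
      have e1 : ((1, 0) : ZMod 4 × ZMod 2) + (0, 0) = (1, 0) := by decide
      have e2 : (2 : ℕ) • ((1, 0) : ZMod 4 × ZMod 2) = (2, 0) := by decide
      rw [e1, e2] at this
      exact (mul_left_cancel₀ (hne g) (by rw [← this, mul_one])).symm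
    intro g
    have := aux (g - (2, 0))
    rwa [sub_add_cancel] at this
  have e11 : ∀ g, ε (1, 1) g = ε (1, 0) g := by
    intro g
    have := hc (1, 0) (0, 1) g
    have e1 : ((1, 0) : ZMod 4 × ZMod 2) + (0, 1) = (1, 1) := by decide
    rw [e1, hg1, mul_one] at this; exact this
  have e20 : ∀ g, ε (2, 0) g = ε (1, 0) g * ε (1, 0) (g + (2, 0)) := by
    intro g
    have := hc (1, 0) (1, 0) g
    have e1 : ((1, 0) : ZMod 4 × ZMod 2) + (1, 0) = (2, 0) := by decide
    have e2 : (2 : ℕ) • ((1, 0) : ZMod 4 × ZMod 2) = (2, 0) := by decide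
    rw [e1, e2] at this; exact this
  have e21 : ∀ g, ε (2, 1) g = ε (2, 0) g := by
    intro g
    have := hc (2, 0) (0, 1) g
    have e1 : ((2, 0) : ZMod 4 × ZMod 2) + (0, 1) = (2, 1) := by decide
    rw [e1, hg1, mul_one] at this; exact this
  have e30 : ∀ g, ε (3, 0) g = ε (2, 0) g * ε (1, 0) g := by
    intro g
    have := hc (2, 0) (1, 0) g
    have e1 : ((2, 0) : ZMod 4 × ZMod 2) + (1, 0) = (3, 0) := by decide
    have e2 : (2 : ℕ) • ((2, 0) : ZMod 4 × ZMod 2) = (0, 0) := by decide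
    have e3 : ((0, 0) : ZMod 4 × ZMod 2) = 0 := rfl
    rw [e1, e2, e3, add_zero] at this; exact this
  have e31 : ∀ g, ε (3, 1) g = ε (3, 0) g := by
    intro g
    have := hc (3, 0) (0, 1) g
    have e1 : ((3, 0) : ZMod 4 × ZMod 2) + (0, 1) = (3, 1) := by decide
    rw [e1, hg1, mul_one] at this; exact this
  have v00 : ∀ g, ε (0, 0) g = myeps (0, 0) g := by
    intro g; rw [hz g]; revert g; decide
  have v01 : ∀ g, ε (0, 1) g = myeps (0, 1) g := by
    intro g; rw [hg1 g]; revert g; decide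
  have v10 : ∀ g, ε (1, 0) g = myeps (1, 0) g := by
    intro g; rw [hg0 g]; revert g; decide
  have v11 : ∀ g, ε (1, 1) g = myeps (1, 1) g := by
    intro g; rw [e11 g, hg0 g]; revert g; decide
  have v20 : ∀ g, ε (2, 0) g = myeps (2, 0) g := by
    intro g; rw [e20 g, hg0, hg0]; revert g; decide
  have v21 : ∀ g, ε (2, 1) g = myeps (2, 1) g := by
    intro g; rw [e21 g, e20 g, hg0, hg0]; revert g; decide
  have v30 : ∀ g, ε (3, 0) g = myeps (3, 0) g := by
    intro g; rw [e30 g, e20 g, hg0, hg0]; revert g; decide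
  have v31 : ∀ g, ε (3, 1) g = myeps (3, 1) g := by
    intro g; rw [e31 g, e30 g, e20 g, hg0, hg0]; revert g; decide
  funext h g
  obtain ⟨h1, h2⟩ := h
  fin_cases h1 <;> fin_cases h2 <;>
    first
      | exact v00 g | exact v01 g | exact v10 g | exact v11 g
      | exact v20 g | exact v21 g | exact v30 g | exact v31 g

/-- The function ε so defined is well-defined (exists and is unique), and satisfies
ε_{(2,0)}(a,b) = (-1)^b for all (a,b) ∈ ℤ/4ℤ × ℤ/2ℤ. -/
theorem stmt_8 :
    (∃! ε : ZMod 4 × ZMod 2 → ZMod 4 × ZMod 2 → ℤ, epsCond ε) ∧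
    ∀ ε, epsCond ε → ∀ (a : ZMod 4) (b : ZMod 2),
      ε (2, 0) (a, b) = (-1 : ℤ) ^ b.val := by
  constructor
  · exact ⟨myeps, myeps_cond, fun ε hε => eps_eq ε hε⟩
  · intro ε hε a b
    rw [eps_eq ε hε]
    revert a b; decide
end
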